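/- arXiv:2406.07206 — 2 statements merged into one kernel-verified Lean document; each statement's English description precedes it below -/
import Mathlib

section
/- For j ≥ 0 with j ≠ 3, the Riemann sum ζ^n_{s,j} := n^{j-3} · Σ_{k ∈ ℤ³\{0}, n ≤ |k| ≤ 2n} 1/|k|^j converges as n → ∞ to ζ_{s,j} := 4π(2^{3-j} − 1)/(3 − j), with error of order O(n^{-1}); i.e. there is a constant C > 0 such that |ζ^n_{s,j} − ζ_{s,j}| ≤ C/n for all n ≥ 1. -/
open scoped BigOperators Classical

/-- Euclidean norm of an integer lattice point in `ℤ³`. -/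
noncomputable def nrm3 (k : Fin 3 → ℤ) : ℝ :=
  Real.sqrt (((k 0 : ℝ)) ^ 2 + ((k 1 : ℝ)) ^ 2 + ((k 2 : ℝ)) ^ 2)

/-- The Riemann sum `ζ^n_{s,j} = n^{j-3} Σ_{k ∈ ℤ³\{0}, n ≤ |k| ≤ 2n} |k|^{-j}`. -/
noncomputable def zetaS (n : ℕ) (j : ℝ) : ℝ :=
  (n : ℝ) ^ (j - 3) *
    ∑' k : Fin 3 → ℤ,
      if k ≠ 0 ∧ (n : ℝ) ≤ nrm3 k ∧ nrm3 k ≤ 2 * n then nrm3 k ^ (-j) else 0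

/-!
Round every point of `ℝ³` to the nearest lattice point. Rounding pushes Lebesgue measure forward
to counting measure, so the lattice sum over the shell `n ≤ |k| ≤ 2n` is the integral of
`x ↦ |round x|^{-j}` over the union `U` of the unit cubes centred at the shell points.
Since `|x - round x| ≤ √3/2 < 1`, the set `U` lies between the annuli `n + 1 ≤ |x| ≤ 2n - 1` and
`n - 1 ≤ |x| ≤ 2n + 1`, and on `U` the integrand lies within the factors `(1 ± 1/n)^j` of
`|x|^{-j}`. Integrating `|x|^{-j}` over annuli in polar coordinates and rescaling by `n` squeezes
`ζ^n_{s,j}` between `B(-1/n)` and `B(1/n)`, where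
`B(h) = (1 + h)^j ∫_{1-h ≤ |x| ≤ 2+h} |x|^{-j} dx`.
As `B` is differentiable at `0` and `B(0) = ζ_{s,j}`, the error is `O(1/n)`.
-/

open MeasureTheory Set Filter Topology Asymptotics Real

noncomputable section

section LatticeRounding

variable {ι : Type*}

def latticePoint (k : ι → ℤ) : EuclideanSpace ℝ ι := WithLp.toLp 2 fun i => (k i : ℝ)

def latticeRound (x : EuclideanSpace ℝ ι) : ι → ℤ := fun i => round (x i)

theorem measurable_latticeRound [Fintype ι] : Measurable (latticeRound (ι := ι)) := by
  unfold latticeRound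
  simp only [round_eq]
  fun_prop

theorem latticeRound_preimage_singleton (k : ι → ℤ) :
    latticeRound ⁻¹' {k} = (MeasurableEquiv.toLp 2 (ι → ℝ)).symm ⁻¹'
      univ.pi fun i => Ico ((k i : ℝ) - 1 / 2) (k i + 1 / 2) := by
  ext x
  simp [latticeRound, funext_iff, round_eq_iff, Set.mem_pi, MeasurableEquiv.toLp_symm_apply]

theorem volume_latticeRound_preimage_singleton [Fintype ι] (k : ι → ℤ) :
    volume (latticeRound ⁻¹' {k}) = 1 := by
  rw [latticeRound_preimage_singleton, (EuclideanSpace.volume_preserving_symm_measurableEquiv_toLp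
    ι).measure_preimage (MeasurableSet.univ_pi fun _ => measurableSet_Ico).nullMeasurableSet,
    volume_pi_pi]
  norm_num

theorem map_latticeRound_volume [Fintype ι] :
    (volume : Measure (EuclideanSpace ℝ ι)).map latticeRound = Measure.count := by
  refine Measure.ext_iff_singleton.2 fun k => ?_
  rw [Measure.map_apply measurable_latticeRound (measurableSet_singleton k),
    volume_latticeRound_preimage_singleton, Measure.count_singleton]

theorem tsum_eq_integral_latticeRound [Fintype ι] {φ : (ι → ℤ) → ℝ} (hφ : Summable φ) :
    ∑' k, φ k = ∫ x, φ (latticeRound x) := by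
  have hint : Integrable φ Measure.count := integrable_count_iff.2 hφ.norm
  rw [← integral_map measurable_latticeRound.aemeasurable (by
    rw [map_latticeRound_volume]; exact hint.aestronglyMeasurable), map_latticeRound_volume,
    integral_countable hint]
  simp

theorem norm_sub_latticePoint_latticeRound_le [Fintype ι] (x : EuclideanSpace ℝ ι) :
    ‖x - latticePoint (latticeRound x)‖ ≤ √(Fintype.card ι) / 2 := by
  have hcoord (i : ι) : ‖(x - latticePoint (latticeRound x)) i‖ ^ 2 ≤ (1 / 2) ^ 2 :=
    pow_le_pow_left₀ (norm_nonneg _) (abs_sub_round (x i)) 2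
  calc ‖x - latticePoint (latticeRound x)‖
      ≤ √(Fintype.card ι * (1 / 2) ^ 2) := by
        rw [EuclideanSpace.norm_eq]
        gcongr
        simpa using Finset.sum_le_card_nsmul Finset.univ _ _ fun i _ => hcoord i
    _ = √(Fintype.card ι) / 2 := by
        rw [sqrt_mul (Nat.cast_nonneg _), sqrt_sq (by norm_num)]
        ring

theorem finite_preimage_latticePoint_closedBall [Fintype ι] (R : ℝ) :
    (latticePoint ⁻¹' Metric.closedBall (0 : EuclideanSpace ℝ ι) R).Finite := by
  refine (finite_Icc (-fun _ => ⌈R⌉) fun _ => ⌈R⌉).subset fun k hk => ?_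
  have hki (i : ι) : |(k i : ℝ)| ≤ R := by
    simpa [latticePoint] using
      (PiLp.norm_apply_le (latticePoint k) i).trans (mem_closedBall_zero_iff.1 hk)
  have hki' (i : ι) : |k i| ≤ ⌈R⌉ := by exact_mod_cast (hki i).trans (Int.le_ceil R)
  exact ⟨fun i => neg_le_of_abs_le (hki' i), fun i => le_of_abs_le (hki' i)⟩

end LatticeRounding

theorem isCompact_norm_preimage_Icc {E : Type*} [NormedAddCommGroup E] [ProperSpace E]
    (a b : ℝ) : IsCompact (norm ⁻¹' Icc a b : Set E) :=
  (isCompact_closedBall 0 b).of_isClosed_subset (isClosed_Icc.preimage continuous_norm)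
    fun _ hx => mem_closedBall_zero_iff.2 hx.2

theorem setIntegral_norm_preimage_Icc {E : Type*} [NormedAddCommGroup E] [NormedSpace ℝ E]
    [MeasurableSpace E] [BorelSpace E] [FiniteDimensional ℝ E] [Nontrivial E] (μ : Measure E)
    [μ.IsAddHaarMeasure] (g : ℝ → ℝ) {a b : ℝ} (ha : 0 < a) (hab : a ≤ b) :
    ∫ x in norm ⁻¹' Icc a b, g ‖x‖ ∂μ =
      Module.finrank ℝ E * μ.real (Metric.ball 0 1) *
        ∫ r in a..b, r ^ (Module.finrank ℝ E - 1) * g r := by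
  have hIcc : Icc a b ⊆ Ioi 0 := fun r hr => ha.trans_le hr.1
  rw [← integral_indicator (measurableSet_Icc.preimage measurable_norm)]
  change ∫ x, (Icc a b).indicator g ‖x‖ ∂μ = _
  rw [integral_fun_norm_addHaar, intervalIntegral.integral_of_le hab,
    ← integral_Icc_eq_integral_Ioc]
  have hind (y : ℝ) : y ^ (Module.finrank ℝ E - 1) • (Icc a b).indicator g y =
      (Icc a b).indicator (fun r => r ^ (Module.finrank ℝ E - 1) * g r) y := by
    rw [smul_eq_mul, indicator_mul_right]
  simp_rw [hind, setIntegral_indicator measurableSet_Icc, inter_eq_right.2 hIcc, nsmul_eq_mul,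
    smul_eq_mul, mul_assoc]

def shellIntegral (j a b : ℝ) : ℝ := 4 * π * (b ^ (3 - j) - a ^ (3 - j)) / (3 - j)

theorem setIntegral_norm_rpow_neg_eq_shellIntegral {j a b : ℝ} (hj : j ≠ 3) (ha : 0 < a)
    (hab : a ≤ b) :
    ∫ x in norm ⁻¹' Icc a b, ‖x‖ ^ (-j) ∂(volume : Measure (EuclideanSpace ℝ (Fin 3))) =
      shellIntegral j a b := by
  rw [setIntegral_norm_preimage_Icc _ (fun r => r ^ (-j)) ha hab, finrank_euclideanSpace_fin,
    measureReal_def, EuclideanSpace.volume_ball_fin_three]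
  have hpow : ∫ r in a..b, r ^ (3 - 1) * r ^ (-j) = ∫ r in a..b, r ^ (2 - j) := by
    refine intervalIntegral.integral_congr fun r hr => ?_
    have hr : 0 < r := ha.trans_le (by rw [uIcc_of_le hab] at hr; exact hr.1)
    rw [sub_eq_add_neg (2 : ℝ), rpow_add hr]
    norm_num
  rw [hpow, integral_rpow (Or.inr ⟨by contrapose! hj; linarith, fun h => ?_⟩)]
  · rw [shellIntegral, show (2 : ℝ) - j + 1 = 3 - j by ring]
    norm_num [ENNReal.toReal_ofReal (by positivity : 0 ≤ π * 4 / 3)]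
    ring
  · rw [uIcc_of_le hab] at h
    exact ha.not_ge h.1

theorem rpow_mul_shellIntegral_mul {c a b : ℝ} (j : ℝ) (hc : 0 < c) (ha : 0 ≤ a) (hb : 0 ≤ b) :
    c ^ (j - 3) * shellIntegral j (c * a) (c * b) = shellIntegral j a b := by
  have hcc : c ^ (j - 3) * c ^ (3 - j) = 1 := by rw [← rpow_add hc]; norm_num
  rw [shellIntegral, shellIntegral, mul_rpow hc.le ha, mul_rpow hc.le hb, ← mul_sub,
    mul_div_assoc, mul_div_assoc, mul_left_comm, mul_div_assoc, ← mul_assoc (c ^ (j - 3)), hcc,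
    one_mul]

theorem setIntegral_pinched {α : Type*} [MeasurableSpace α] {μ : Measure α} {f F : α → ℝ}
    {A U B : Set α} {c₁ c₂ : ℝ} (hU : MeasurableSet U) (hAU : A ⊆ U) (hUB : U ⊆ B)
    (hf₀ : 0 ≤ f) (hf : IntegrableOn f B μ) (hF : AEStronglyMeasurable F (μ.restrict U))
    (hc₁ : 0 ≤ c₁) (hc₂ : 0 ≤ c₂) (hF₁ : ∀ x ∈ U, c₁ * f x ≤ F x)
    (hF₂ : ∀ x ∈ U, F x ≤ c₂ * f x) :
    c₁ * ∫ x in A, f x ∂μ ≤ ∫ x in U, F x ∂μ ∧ ∫ x in U, F x ∂μ ≤ c₂ * ∫ x in B, f x ∂μ := by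
  have hfU : IntegrableOn f U μ := hf.mono_set hUB
  have hFU : IntegrableOn F U μ := by
    refine (hfU.const_mul c₂).mono' hF (ae_restrict_of_forall_mem hU fun x hx => ?_)
    rw [Real.norm_eq_abs, abs_of_nonneg ((mul_nonneg hc₁ (hf₀ x)).trans (hF₁ x hx))]
    exact hF₂ x hx
  have hmono {s t : Set α} (hst : s ⊆ t) (ht : IntegrableOn f t μ) :
      ∫ x in s, f x ∂μ ≤ ∫ x in t, f x ∂μ :=
    setIntegral_mono_set ht (Eventually.of_forall hf₀) hst.eventuallyLE
  constructor
  · calc c₁ * ∫ x in A, f x ∂μ ≤ c₁ * ∫ x in U, f x ∂μ :=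
          mul_le_mul_of_nonneg_left (hmono hAU hfU) hc₁
      _ = ∫ x in U, c₁ * f x ∂μ := (integral_const_mul c₁ _).symm
      _ ≤ ∫ x in U, F x ∂μ := setIntegral_mono_on (hfU.const_mul c₁) hFU hU hF₁
  · calc ∫ x in U, F x ∂μ ≤ ∫ x in U, c₂ * f x ∂μ :=
          setIntegral_mono_on hFU (hfU.const_mul c₂) hU hF₂
      _ = c₂ * ∫ x in U, f x ∂μ := integral_const_mul c₂ _
      _ ≤ c₂ * ∫ x in B, f x ∂μ := mul_le_mul_of_nonneg_left (hmono hUB hf) hc₂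

theorem mul_rpow_neg_eq_div_rpow_neg {c r : ℝ} (j : ℝ) (hc : 0 < c) (hr : 0 ≤ r) :
    c ^ j * r ^ (-j) = (r / c) ^ (-j) := by
  rw [rpow_neg (div_nonneg hr hc.le), div_rpow hr hc.le, inv_div, rpow_neg hr, div_eq_mul_inv]

theorem rpow_neg_pinched {n K r j : ℝ} (hn : 1 < n) (hj : 0 ≤ j) (hK : n ≤ K)
    (hrK : |r - K| ≤ 1) :
    (1 - n⁻¹) ^ j * r ^ (-j) ≤ K ^ (-j) ∧ K ^ (-j) ≤ (1 + n⁻¹) ^ j * r ^ (-j) := by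
  obtain ⟨hrK₁, hrK₂⟩ := abs_le.1 hrK
  have hn₀ : 0 < n := zero_lt_one.trans hn
  have hr : 0 < r := by linarith
  have hKn : 1 ≤ K * n⁻¹ := by rw [← div_eq_mul_inv, one_le_div hn₀]; exact hK
  have hrn : 1 ≤ (r + 1) * n⁻¹ := by rw [← div_eq_mul_inv, one_le_div hn₀]; linarith
  have hsub : 0 < 1 - n⁻¹ := sub_pos.2 (inv_lt_one_of_one_lt₀ hn)
  rw [mul_rpow_neg_eq_div_rpow_neg j hsub hr.le,
    mul_rpow_neg_eq_div_rpow_neg j (by positivity) hr.le]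
  constructor
  · refine rpow_le_rpow_of_nonpos (by linarith) ?_ (neg_nonpos.2 hj)
    rw [le_div_iff₀ hsub]
    nlinarith
  · refine rpow_le_rpow_of_nonpos (by positivity) ?_ (neg_nonpos.2 hj)
    rw [div_le_iff₀ (by positivity)]
    nlinarith

def latticeShell (a b : ℝ) : Set (Fin 3 → ℤ) := latticePoint ⁻¹' (norm ⁻¹' Icc a b)

theorem nrm3_eq_norm_latticePoint (k : Fin 3 → ℤ) : nrm3 k = ‖latticePoint k‖ := by
  simp [EuclideanSpace.norm_eq, nrm3, Fin.sum_univ_three, latticePoint, sq_abs]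

theorem abs_norm_sub_norm_latticeRound_le_one (x : EuclideanSpace ℝ (Fin 3)) :
    |‖x‖ - ‖latticePoint (latticeRound x)‖| ≤ 1 :=
  (abs_norm_sub_norm_le _ _).trans <| (norm_sub_latticePoint_latticeRound_le x).trans <| by
    rw [Fintype.card_fin, div_le_one two_pos, sqrt_le_left zero_le_two]
    norm_num

theorem zetaS_eq_setIntegral {n : ℕ} (hn : 1 ≤ n) (j : ℝ) :
    zetaS n j = n ^ (j - 3) * ∫ x in latticeRound ⁻¹' latticeShell n (2 * n),
      ‖latticePoint (latticeRound x)‖ ^ (-j) := by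
  set S := latticeShell n (2 * n)
  have hS : S.Finite := (finite_preimage_latticePoint_closedBall (2 * n)).subset fun k hk =>
    mem_closedBall_zero_iff.2 hk.2
  have hsummand (k : Fin 3 → ℤ) :
      (if k ≠ 0 ∧ (n : ℝ) ≤ nrm3 k ∧ nrm3 k ≤ 2 * n then nrm3 k ^ (-j) else 0) =
        S.indicator (fun k => ‖latticePoint k‖ ^ (-j)) k := by
    simp only [indicator_apply, S, latticeShell, mem_preimage, mem_Icc, ← nrm3_eq_norm_latticePoint]
    refine if_congr ⟨fun h => h.2, fun h => ⟨?_, h⟩⟩ rfl rfl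
    rintro rfl
    simp [nrm3] at h
    omega
  rw [zetaS, tsum_congr hsummand, tsum_eq_integral_latticeRound, ← integral_indicator]
  · rfl
  · exact measurable_latticeRound hS.countable.measurableSet
  · exact summable_of_hasFiniteSupport (hS.subset (support_indicator_subset))

def shellBound (j h : ℝ) : ℝ := (1 + h) ^ j * shellIntegral j (1 - h) (2 + h)

theorem shellBound_zero (j : ℝ) :
    shellBound j 0 = 4 * π * ((2 : ℝ) ^ (3 - j) - 1) / (3 - j) := by
  simp [shellBound, shellIntegral]

theorem differentiableAt_shellBound (j : ℝ) : DifferentiableAt ℝ (shellBound j) 0 := by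
  unfold shellBound shellIntegral
  fun_prop (disch := norm_num)

theorem shellBound_inv_eq {n : ℝ} (hn : 1 ≤ n) (j : ℝ) :
    shellBound j n⁻¹ = n ^ (j - 3) * ((1 + n⁻¹) ^ j * shellIntegral j (n - 1) (2 * n + 1)) := by
  have hnh : n * n⁻¹ = 1 := mul_inv_cancel₀ (by positivity)
  have hh : n⁻¹ ≤ 1 := inv_le_one_of_one_le₀ hn
  rw [shellBound, ← rpow_mul_shellIntegral_mul j (by positivity) (by linarith) (by positivity),
    show n * (1 - n⁻¹) = n - 1 by linear_combination -hnh,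
    show n * (2 + n⁻¹) = 2 * n + 1 by linear_combination hnh]
  ring

theorem shellBound_neg_inv_eq {n : ℝ} (hn : 1 ≤ n) (j : ℝ) :
    shellBound j (-n⁻¹) = n ^ (j - 3) * ((1 - n⁻¹) ^ j * shellIntegral j (n + 1) (2 * n - 1)) := by
  have hnh : n * n⁻¹ = 1 := mul_inv_cancel₀ (by positivity)
  have hh : n⁻¹ ≤ 1 := inv_le_one_of_one_le₀ hn
  have hh₀ : 0 ≤ n⁻¹ := by positivity
  rw [shellBound, ← rpow_mul_shellIntegral_mul j (by positivity) (by linarith) (by linarith),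
    show n * (1 - -n⁻¹) = n + 1 by linear_combination hnh,
    show n * (2 + -n⁻¹) = 2 * n - 1 by linear_combination -hnh, ← sub_eq_add_neg]
  ring

theorem setIntegral_latticeRound_pinched {n : ℝ} (hn : 2 ≤ n) {j : ℝ} (hj : 0 ≤ j)
    (hj3 : j ≠ 3) :
    (1 - n⁻¹) ^ j * shellIntegral j (n + 1) (2 * n - 1) ≤
        ∫ x in latticeRound ⁻¹' latticeShell n (2 * n),
          ‖latticePoint (latticeRound x)‖ ^ (-j) ∧
      ∫ x in latticeRound ⁻¹' latticeShell n (2 * n),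
          ‖latticePoint (latticeRound x)‖ ^ (-j) ≤
        (1 + n⁻¹) ^ j * shellIntegral j (n - 1) (2 * n + 1) := by
  set U := latticeRound ⁻¹' latticeShell n (2 * n)
  have hround := abs_norm_sub_norm_latticeRound_le_one
  have hinner : norm ⁻¹' Icc (n + 1) (2 * n - 1) ⊆ U := fun x hx => by
    have := abs_le.1 (hround x); exact ⟨by linarith [hx.1], by linarith [hx.2]⟩
  have houter : U ⊆ norm ⁻¹' Icc (n - 1) (2 * n + 1) := fun x hx => by
    have := abs_le.1 (hround x); exact ⟨by linarith [hx.1], by linarith [hx.2]⟩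
  have hf : IntegrableOn (fun x : EuclideanSpace ℝ (Fin 3) => ‖x‖ ^ (-j))
      (norm ⁻¹' Icc (n - 1) (2 * n + 1)) :=
    (continuous_norm.continuousOn.rpow_const fun x (hx : n - 1 ≤ ‖x‖ ∧ _) =>
      Or.inl (by linarith [hx.1])).integrableOn_compact (isCompact_norm_preimage_Icc _ _)
  have hh : n⁻¹ ≤ 1 := inv_le_one_of_one_le₀ (by linarith)
  rw [← setIntegral_norm_rpow_neg_eq_shellIntegral hj3 (by linarith) (by linarith),
    ← setIntegral_norm_rpow_neg_eq_shellIntegral hj3 (by linarith) (by linarith)]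
  exact setIntegral_pinched (measurable_latticeRound (to_countable _).measurableSet) hinner houter
    (fun x => rpow_nonneg (norm_nonneg x) _) hf
    ((Measurable.of_discrete (f := fun k => ‖latticePoint k‖ ^ (-j))).comp
      measurable_latticeRound).aestronglyMeasurable
    (rpow_nonneg (by linarith) _) (by positivity)
    (fun x hx => (rpow_neg_pinched (by linarith) hj hx.1 (hround x)).1)
    (fun x hx => (rpow_neg_pinched (by linarith) hj hx.1 (hround x)).2)

theorem shellBound_neg_inv_le_zetaS_le_shellBound_inv {n : ℕ} (hn : 2 ≤ n) {j : ℝ}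
    (hj : 0 ≤ j) (hj3 : j ≠ 3) :
    shellBound j (-(n : ℝ)⁻¹) ≤ zetaS n j ∧ zetaS n j ≤ shellBound j (n : ℝ)⁻¹ := by
  have hn' : (2 : ℝ) ≤ n := by exact_mod_cast hn
  obtain ⟨hlow, hup⟩ := setIntegral_latticeRound_pinched hn' hj hj3
  have hnj : 0 ≤ (n : ℝ) ^ (j - 3) := by positivity
  rw [zetaS_eq_setIntegral (by omega), shellBound_neg_inv_eq (by linarith),
    shellBound_inv_eq (by linarith)]
  exact ⟨mul_le_mul_of_nonneg_left hlow hnj, mul_le_mul_of_nonneg_left hup hnj⟩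

theorem isBigO_inv_of_pinched {g : ℝ → ℝ} (hg : DifferentiableAt ℝ g 0) {a : ℕ → ℝ}
    (ha : ∀ᶠ n : ℕ in atTop, g (-(n : ℝ)⁻¹) ≤ a n ∧ a n ≤ g (n : ℝ)⁻¹) :
    (fun n => a n - g 0) =O[atTop] fun n => (n : ℝ)⁻¹ := by
  have hinv : Tendsto (fun n : ℕ => (n : ℝ)⁻¹) atTop (𝓝 0) := tendsto_inv_atTop_nhds_zero_nat
  have hup : (fun n : ℕ => g (n : ℝ)⁻¹ - g 0) =O[atTop] fun n => (n : ℝ)⁻¹ := by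
    simpa [Function.comp_def] using hg.isBigO_sub.comp_tendsto hinv
  have hlow : (fun n : ℕ => g (-(n : ℝ)⁻¹) - g 0) =O[atTop] fun n => (n : ℝ)⁻¹ := by
    have hneg : Tendsto (fun n : ℕ => -(n : ℝ)⁻¹) atTop (𝓝 0) := by simpa using hinv.neg
    exact isBigO_neg_right.1 (by simpa [Function.comp_def] using hg.isBigO_sub.comp_tendsto hneg)
  refine (IsBigO.of_bound 1 (ha.mono fun n hn => ?_)).trans (hup.norm_left.add hlow.norm_left)
  set u := g (n : ℝ)⁻¹ - g 0
  set l := g (-(n : ℝ)⁻¹) - g 0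
  calc ‖a n - g 0‖ ≤ |u| + |l| := by
        rw [Real.norm_eq_abs, abs_le]
        constructor <;>
          linarith [le_abs_self u, neg_abs_le l, abs_nonneg u, abs_nonneg l, hn.1, hn.2]
    _ ≤ 1 * ‖|u| + |l|‖ := by rw [one_mul]; exact le_norm_self _

end

/-- For `j ≥ 0`, `j ≠ 3`, the Riemann sum `ζ^n_{s,j}` converges to
`ζ_{s,j} = 4π (2^{3-j} - 1)/(3-j)` with rate `O(n⁻¹)`. -/
theorem riemann_sum_shell_3d (j : ℝ) (hj : 0 ≤ j) (hj3 : j ≠ 3) :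
    ∃ C > 0, ∀ n : ℕ, 1 ≤ n →
      |zetaS n j - 4 * Real.pi * ((2 : ℝ) ^ (3 - j) - 1) / (3 - j)| ≤ C / n := by
  have hO := isBigO_inv_of_pinched (differentiableAt_shellBound j) (a := fun n => zetaS n j)
    (eventually_atTop.2
      ⟨2, fun n hn => shellBound_neg_inv_le_zetaS_le_shellBound_inv hn hj hj3⟩)
  rw [shellBound_zero] at hO
  obtain ⟨C, hC, hbound⟩ := bound_of_isBigO_nat_atTop hO
  refine ⟨C, hC, fun n hn => ?_⟩
  simpa [div_eq_mul_inv] using hbound (inv_ne_zero (Nat.cast_ne_zero.2 (by omega)))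
end

section
/- For every δ > 0 there is a constant C(δ) such that for all n ≥ 1 and all h ∈ ℤ³\{0}: Σ_{k ∈ ℤ³\{0}, k ≠ −h, n ≤ |k| ≤ 2n} |h|² / (|k|³ |h+k|^{2+δ}) ≤ C(δ). -/
open scoped BigOperators Classical

/-!
Write `a = |k| ∈ [n, 2n]` and `b = |h + k| ≥ 1`. Since `|h| ≤ a + b` and `b ^ (2 + δ) ≥ b ^ 2`, each
term is at most `2 / (a b²) + 2 / a³`. The second part summed over the `O(n³)` points with
`|k| ≤ 2n` is `O(1)`. For the first, `1 / (a b²) ≤ 1 / (n b²)` when `b ≤ n` and `≤ 1 / n³` otherwise;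
the terms with `b ≤ n` are bounded by `(1/n) Σ_{0 < |z| ≤ n} |z|⁻²`, and this lattice sum is `O(n)`
because the cube shell of sup-radius `m` has `24 m² + 2` points, each of norm at least `m`.
-/

section IntCube

variable (ι : Type*) [Fintype ι] [DecidableEq ι]

noncomputable def intCube (M : ℕ) : Finset (ι → ℤ) :=
  Fintype.piFinset fun _ => Finset.Icc (-(M : ℤ)) M

variable {ι}

theorem mem_intCube {M : ℕ} {k : ι → ℤ} : k ∈ intCube ι M ↔ ∀ i, |k i| ≤ M := by
  simp [intCube, abs_le]

theorem card_intCube (M : ℕ) : (intCube ι M).card = (2 * M + 1) ^ Fintype.card ι := by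
  simp only [intCube, Fintype.card_piFinset, Int.card_Icc, Finset.prod_const, Finset.card_univ]
  congr 1
  omega

theorem intCube_mono {M N : ℕ} (hMN : M ≤ N) : intCube ι M ⊆ intCube ι N := fun _ hk =>
  mem_intCube.2 fun i => (mem_intCube.1 hk i).trans (by exact_mod_cast hMN)

theorem intCube_zero : intCube ι 0 = {0} := by
  ext k
  simp only [mem_intCube, Finset.mem_singleton, Nat.cast_zero, abs_nonpos_iff, funext_iff,
    Pi.zero_apply]

end IntCube

section Nrm3

theorem nrm3_eq_norm (k : Fin 3 → ℤ) :
    nrm3 k = ‖WithLp.toLp 2 (fun i => (k i : ℝ))‖ := by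
  simp [EuclideanSpace.norm_eq, nrm3, Fin.sum_univ_three, sq_abs]

theorem nrm3_zero : nrm3 0 = 0 := by
  simp [nrm3]

theorem nrm3_neg (k : Fin 3 → ℤ) : nrm3 (-k) = nrm3 k := by
  simp [nrm3]

theorem nrm3_add_le (h k : Fin 3 → ℤ) : nrm3 (h + k) ≤ nrm3 h + nrm3 k := by
  simp only [nrm3_eq_norm, Pi.add_apply, Int.cast_add]
  exact norm_add_le (WithLp.toLp 2 fun i => (h i : ℝ)) (WithLp.toLp 2 fun i => (k i : ℝ))

theorem abs_apply_le_nrm3 (k : Fin 3 → ℤ) (i : Fin 3) : ((|k i| : ℤ) : ℝ) ≤ nrm3 k := by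
  simpa [nrm3_eq_norm] using PiLp.norm_apply_le (WithLp.toLp 2 fun i => (k i : ℝ)) i

theorem one_le_nrm3 {k : Fin 3 → ℤ} (hk : k ≠ 0) : 1 ≤ nrm3 k := by
  obtain ⟨i, hi⟩ := Function.ne_iff.mp hk
  have : (1 : ℝ) ≤ ((|k i| : ℤ) : ℝ) := by exact_mod_cast Int.one_le_abs hi
  exact this.trans (abs_apply_le_nrm3 k i)

theorem mem_intCube_of_nrm3_le {M : ℕ} {k : Fin 3 → ℤ} (hk : nrm3 k ≤ M) : k ∈ intCube (Fin 3) M :=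
  mem_intCube.2 fun i => by exact_mod_cast (abs_apply_le_nrm3 k i).trans hk

theorem add_one_le_nrm3_of_notMem_intCube {M : ℕ} {k : Fin 3 → ℤ} (hk : k ∉ intCube (Fin 3) M) :
    (M : ℝ) + 1 ≤ nrm3 k := by
  obtain ⟨i, hi⟩ := not_forall.1 (mt mem_intCube.2 hk)
  have : (M : ℝ) + 1 ≤ ((|k i| : ℤ) : ℝ) := by exact_mod_cast Int.add_one_le_of_lt (not_le.1 hi)
  exact this.trans (abs_apply_le_nrm3 k i)

end Nrm3

section InvSqSum

theorem card_intCube_succ_sdiff (m : ℕ) :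
    ((intCube (Fin 3) (m + 1) \ intCube (Fin 3) m).card : ℝ) ≤ 26 * ((m : ℝ) + 1) ^ 2 := by
  rw [Finset.card_sdiff_of_subset (intCube_mono m.le_succ), card_intCube, card_intCube,
    Fintype.card_fin, Nat.cast_sub (Nat.pow_le_pow_left (by omega) 3)]
  push_cast
  nlinarith [sq_nonneg (m : ℝ), m.cast_nonneg (α := ℝ)]

/-- The term `z = 0` contributes `(0 ^ 2)⁻¹ = 0`, so this is the sum over `0 < |z|_∞ ≤ n`. -/
theorem sum_intCube_inv_nrm3_sq_le (n : ℕ) :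
    ∑ z ∈ intCube (Fin 3) n, (nrm3 z ^ 2)⁻¹ ≤ 26 * n := by
  induction n with
  | zero => simp [intCube_zero, nrm3_zero]
  | succ m ih =>
    have hshell : ∀ z ∈ intCube (Fin 3) (m + 1) \ intCube (Fin 3) m,
        (nrm3 z ^ 2)⁻¹ ≤ (((m : ℝ) + 1) ^ 2)⁻¹ := fun z hz => by
      have := add_one_le_nrm3_of_notMem_intCube (Finset.mem_sdiff.1 hz).2
      gcongr
    have hshell_sum :
        ∑ z ∈ intCube (Fin 3) (m + 1) \ intCube (Fin 3) m, (nrm3 z ^ 2)⁻¹ ≤ 26 := by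
      refine (Finset.sum_le_card_nsmul _ _ _ hshell).trans ?_
      rw [nsmul_eq_mul, ← div_eq_mul_inv, div_le_iff₀ (by positivity)]
      exact card_intCube_succ_sdiff m
    rw [← Finset.sum_sdiff (intCube_mono m.le_succ)]
    push_cast
    linarith

noncomputable def ballInvSq (n : ℝ) (z : Fin 3 → ℤ) : ℝ :=
  if nrm3 z ≤ n then (nrm3 z ^ 2)⁻¹ else 0

theorem ballInvSq_nonneg (n : ℝ) (z : Fin 3 → ℤ) : 0 ≤ ballInvSq n z := by
  unfold ballInvSq
  split_ifs <;> positivity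

theorem sum_ballInvSq_add_le (n : ℕ) (h : Fin 3 → ℤ) (s : Finset (Fin 3 → ℤ)) :
    ∑ k ∈ s, ballInvSq n (h + k) ≤ 26 * n := by
  calc ∑ k ∈ s, ballInvSq n (h + k)
      = ∑ z ∈ s.image (h + ·), ballInvSq n z :=
        (Finset.sum_image fun _ _ _ _ => add_left_cancel).symm
    _ ≤ ∑ z ∈ s.image (h + ·) ∪ intCube (Fin 3) n, ballInvSq n z :=
        Finset.sum_le_sum_of_subset_of_nonneg Finset.subset_union_left
          fun z _ _ => ballInvSq_nonneg n z
    _ = ∑ z ∈ intCube (Fin 3) n, ballInvSq n z := by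
        refine (Finset.sum_subset Finset.subset_union_right fun z _ hz => ?_).symm
        exact if_neg fun hzn => hz (mem_intCube_of_nrm3_le hzn)
    _ ≤ ∑ z ∈ intCube (Fin 3) n, (nrm3 z ^ 2)⁻¹ :=
        Finset.sum_le_sum fun z _ => by
          unfold ballInvSq
          split_ifs
          · rfl
          · positivity
    _ ≤ 26 * n := sum_intCube_inv_nrm3_sq_le n

end InvSqSum

section PointwiseBound

theorem sq_div_le_of_le_add {x a b δ : ℝ} (hx : 0 ≤ x) (hxab : x ≤ a + b) (ha : 0 < a)
    (hb : 1 ≤ b) (hδ : 0 ≤ δ) :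
    x ^ 2 / (a ^ 3 * b ^ (2 + δ)) ≤ 2 / (a * b ^ 2) + 2 / a ^ 3 := by
  have hb_rpow : b ^ 2 ≤ b ^ (2 + δ) := by
    have := Real.rpow_le_rpow_of_exponent_le (y := 2) hb (le_add_of_nonneg_right hδ)
    rwa [Real.rpow_two] at this
  have hx_sq : x ^ 2 ≤ 2 * a ^ 2 + 2 * b ^ 2 := by
    nlinarith [sq_nonneg (a - b)]
  calc x ^ 2 / (a ^ 3 * b ^ (2 + δ))
      ≤ (2 * a ^ 2 + 2 * b ^ 2) / (a ^ 3 * b ^ 2) := by gcongr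
    _ = 2 / (a * b ^ 2) + 2 / a ^ 3 := by field_simp

theorem inv_mul_sq_le {n a b : ℝ} (hn : 0 < n) (ha : n ≤ a) (hb : 0 < b) :
    (a * b ^ 2)⁻¹ ≤ n⁻¹ * (if b ≤ n then (b ^ 2)⁻¹ else 0) + (n ^ 3)⁻¹ := by
  have ha0 : 0 < a := hn.trans_le ha
  split_ifs with hbn
  · calc (a * b ^ 2)⁻¹ ≤ (n * b ^ 2)⁻¹ := by gcongr
      _ ≤ n⁻¹ * (b ^ 2)⁻¹ + (n ^ 3)⁻¹ := by rw [mul_inv]; linarith [inv_pos.2 (pow_pos hn 3)]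
  · have hnb := (not_le.1 hbn).le
    calc (a * b ^ 2)⁻¹ ≤ (n * n ^ 2)⁻¹ := by gcongr
      _ = n⁻¹ * 0 + (n ^ 3)⁻¹ := by ring

theorem nrm3_sq_div_le_ballInvSq {n : ℕ} (hn : 0 < n) {δ : ℝ} (hδ : 0 ≤ δ) {h k : Fin 3 → ℤ}
    (hk : (n : ℝ) ≤ nrm3 k) (hhk : h + k ≠ 0) :
    nrm3 h ^ 2 / (nrm3 k ^ 3 * nrm3 (h + k) ^ (2 + δ)) ≤
      2 / n * ballInvSq n (h + k) + 4 / (n : ℝ) ^ 3 := by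
  have hnR : (0 : ℝ) < n := by exact_mod_cast hn
  have hh : nrm3 h ≤ nrm3 k + nrm3 (h + k) := by
    simpa [nrm3_neg, add_comm] using nrm3_add_le (h + k) (-k)
  have hb := one_le_nrm3 hhk
  have h2 := inv_mul_sq_le hnR hk (by linarith : 0 < nrm3 (h + k))
  have h3 : (nrm3 k ^ 3)⁻¹ ≤ ((n : ℝ) ^ 3)⁻¹ := by gcongr
  calc nrm3 h ^ 2 / (nrm3 k ^ 3 * nrm3 (h + k) ^ (2 + δ))
      ≤ 2 / (nrm3 k * nrm3 (h + k) ^ 2) + 2 / nrm3 k ^ 3 :=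
        sq_div_le_of_le_add (Real.sqrt_nonneg _) hh (by linarith) hb hδ
    _ ≤ 2 / n * ballInvSq n (h + k) + 4 / (n : ℝ) ^ 3 := by
        simp only [div_eq_mul_inv, ballInvSq] at h2 ⊢
        linarith

end PointwiseBound

/-- For every `δ > 0` there is `C(δ)` such that for all `n ≥ 1` and `h ∈ ℤ³\{0}`:
`Σ_{k ≠ 0, k ≠ -h, n ≤ |k| ≤ 2n} |h|²/(|k|³ |h+k|^{2+δ}) ≤ C(δ)`. -/
theorem lattice_convolution_bound_3d (δ : ℝ) (hδ : 0 < δ) :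
    ∃ C > 0, ∀ n : ℕ, 1 ≤ n → ∀ h : Fin 3 → ℤ, h ≠ 0 →
      (∑' k : Fin 3 → ℤ,
        if k ≠ 0 ∧ k ≠ -h ∧ (n : ℝ) ≤ nrm3 k ∧ nrm3 k ≤ 2 * n then
          nrm3 h ^ 2 / (nrm3 k ^ 3 * nrm3 (h + k) ^ (2 + δ)) else 0) ≤ C := by
  refine ⟨552, by norm_num, fun n hn h _ => ?_⟩
  have hnR : (1 : ℝ) ≤ n := by exact_mod_cast hn
  rw [tsum_eq_sum (s := intCube (Fin 3) (2 * n)) fun k hk =>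
    if_neg fun hk' => hk (mem_intCube_of_nrm3_le (by push_cast; exact hk'.2.2.2))]
  have hpoint : ∀ k ∈ intCube (Fin 3) (2 * n),
      (if k ≠ 0 ∧ k ≠ -h ∧ (n : ℝ) ≤ nrm3 k ∧ nrm3 k ≤ 2 * n then
        nrm3 h ^ 2 / (nrm3 k ^ 3 * nrm3 (h + k) ^ (2 + δ)) else 0) ≤
      2 / n * ballInvSq n (h + k) + 4 / (n : ℝ) ^ 3 := fun k _ => by
    split_ifs with hk
    · exact nrm3_sq_div_le_ballInvSq hn hδ.le hk.2.2.1 fun h0 => hk.2.1 (neg_eq_of_add_eq_zero_right h0).symm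
    · have := ballInvSq_nonneg n (h + k)
      positivity
  have hcard : ((intCube (Fin 3) (2 * n)).card : ℝ) ≤ 125 * (n : ℝ) ^ 3 := by
    rw [card_intCube, Fintype.card_fin]
    push_cast
    nlinarith [sq_nonneg ((n : ℝ) - 1)]
  calc _ ≤ ∑ k ∈ intCube (Fin 3) (2 * n), (2 / n * ballInvSq n (h + k) + 4 / (n : ℝ) ^ 3) :=
        Finset.sum_le_sum hpoint
    _ = 2 / n * ∑ k ∈ intCube (Fin 3) (2 * n), ballInvSq n (h + k) +
          (intCube (Fin 3) (2 * n)).card * (4 / (n : ℝ) ^ 3) := by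
        rw [Finset.sum_add_distrib, Finset.mul_sum, Finset.sum_const, nsmul_eq_mul]
    _ ≤ 2 / n * (26 * n) + 125 * (n : ℝ) ^ 3 * (4 / (n : ℝ) ^ 3) := by
        gcongr
        exact sum_ballInvSq_add_le n h _
    _ = 552 := by field_simp; norm_num
end
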